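/- arXiv:1810.02378 — 2 statements merged into one kernel-verified Lean document; each statement's English description precedes it below -/
import Mathlib

section
/- Let H be a fixed n×n Hermitian matrix over ℂ that is not a scalar multiple of the identity, for T > 0 let ρ_T = exp(-H/T)/Tr[exp(-H/T)] be the Gibbs state, and let F(T) be the quantum Fisher information of the family T ↦ ρ_T at T. Then measuring the energy (i.e., projective measurement on the eigenstates of H) achieves the QFI exactly: (∂_T Tr[H ρ_T])² / (Tr[H² ρ_T] − (Tr[H ρ_T])²) = F(T) for every T > 0. -/
open scoped Classical

open Matrix Filter Asymptotics ComplexOrder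

/-- Positive-semidefinite matrix square root (0 if not PSD). -/
noncomputable def msqrt {m : Type*} [Fintype m] [DecidableEq m] (A : Matrix m m ℂ) :
    Matrix m m ℂ :=
  if h : A.PosSemidef then
    (h.1.eigenvectorUnitary : Matrix m m ℂ) * diagonal ((↑) ∘ Real.sqrt ∘ h.1.eigenvalues) *
      (star h.1.eigenvectorUnitary : Matrix m m ℂ)
  else 0

/-- Fidelity between density matrices. -/
noncomputable def Fid {m : Type*} [Fintype m] [DecidableEq m] (ρ σ : Matrix m m ℂ) : ℝ :=
  ((msqrt (msqrt ρ * σ * msqrt ρ)).trace).re ^ 2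

/-- Quantum Fisher information of a family of states at a point. -/
noncomputable def QFI {m : Type*} [Fintype m] [DecidableEq m] (ρ : ℝ → Matrix m m ℂ) (ξ : ℝ) : ℝ :=
  -2 * iteratedDeriv 2 (fun ε => Fid (ρ ξ) (ρ (ξ + ε))) 0

/-- Gibbs state exp((-1/T) H)/Z. -/
noncomputable def gibbs {m : Type*} [Fintype m] [DecidableEq m] (H : Matrix m m ℂ) (T : ℝ) :
    Matrix m m ℂ :=
  ((NormedSpace.exp ((-(T : ℂ)⁻¹) • H)).trace)⁻¹ • NormedSpace.exp ((-(T : ℂ)⁻¹) • H)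

/-- Von Neumann entropy. -/
noncomputable def vnEntropy {m : Type*} [Fintype m] [DecidableEq m] (ρ : Matrix m m ℂ) : ℝ :=
  if h : ρ.IsHermitian then -∑ i, h.eigenvalues i * Real.log (h.eigenvalues i) else 0

open scoped Topology

/-! ### Auxiliary real-analysis layer -/

noncomputable def auxE (c t : ℝ) : ℝ := Real.exp (c / t)

lemma hasDerivAt_cdiv (c : ℝ) {t : ℝ} (ht : t ≠ 0) :
    HasDerivAt (fun s : ℝ => c / s) (-c / t ^ 2) t := by
  simp only [div_eq_mul_inv]
  have h := (hasDerivAt_inv ht).const_mul c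
  refine h.congr_deriv ?_
  ring

lemma hasDerivAt_cdiv2 (c : ℝ) {t : ℝ} (ht : t ≠ 0) :
    HasDerivAt (fun s : ℝ => c / s ^ 2) (-(2 * c) / t ^ 3) t := by
  have h := ((hasDerivAt_pow 2 t).inv (pow_ne_zero 2 ht)).const_mul c
  simp only [div_eq_mul_inv]
  refine h.congr_deriv ?_
  field_simp
  ring

lemma hasDerivAt_auxE (c : ℝ) {t : ℝ} (ht : t ≠ 0) :
    HasDerivAt (fun s => auxE c s) (auxE c t * (-c / t ^ 2)) t :=
  (hasDerivAt_cdiv c ht).exp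

lemma hasDerivAt_auxE2 (c d : ℝ) {t : ℝ} (ht : t ≠ 0) :
    HasDerivAt (fun s => auxE c s * (d / s ^ 2))
      (auxE c t * (-c / t ^ 2) * (d / t ^ 2) + auxE c t * (-(2 * d) / t ^ 3)) t :=
  (hasDerivAt_auxE c ht).mul (hasDerivAt_cdiv2 d ht)

variable {n : ℕ}

noncomputable def auxZ (lam : Fin n → ℝ) (t : ℝ) : ℝ := ∑ i, auxE (-lam i) t
noncomputable def auxZd (lam : Fin n → ℝ) (t : ℝ) : ℝ :=
  ∑ i, auxE (-lam i) t * (- -lam i / t ^ 2)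
noncomputable def auxZdd (lam : Fin n → ℝ) (t : ℝ) : ℝ :=
  ∑ i, (auxE (-lam i) t * (- -lam i / t ^ 2) * (- -lam i / t ^ 2)
      + auxE (-lam i) t * (-(2 * - -lam i) / t ^ 3))
noncomputable def auxN (lam : Fin n → ℝ) (T s : ℝ) : ℝ :=
  ∑ i, auxE (-lam i / 2) T * auxE (-lam i / 2) s
noncomputable def auxNd (lam : Fin n → ℝ) (T s : ℝ) : ℝ :=
  ∑ i, auxE (-lam i / 2) T * (auxE (-lam i / 2) s * (- (-lam i / 2) / s ^ 2))
noncomputable def auxNdd (lam : Fin n → ℝ) (T s : ℝ) : ℝ :=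
  ∑ i, auxE (-lam i / 2) T *
    (auxE (-lam i / 2) s * (- (-lam i / 2) / s ^ 2) * (- (-lam i / 2) / s ^ 2)
      + auxE (-lam i / 2) s * (-(2 * (- (-lam i / 2))) / s ^ 3))
noncomputable def auxS1 (lam : Fin n → ℝ) (t : ℝ) : ℝ := ∑ i, lam i * auxE (-lam i) t
noncomputable def auxS2 (lam : Fin n → ℝ) (t : ℝ) : ℝ := ∑ i, lam i ^ 2 * auxE (-lam i) t
noncomputable def auxS1d (lam : Fin n → ℝ) (t : ℝ) : ℝ :=
  ∑ i, lam i * (auxE (-lam i) t * (- -lam i / t ^ 2))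

section analysis

variable {lam : Fin n → ℝ} {t : ℝ}

lemma hasDerivAt_auxZ (ht : t ≠ 0) : HasDerivAt (fun s => auxZ lam s) (auxZd lam t) t :=
  HasDerivAt.fun_sum fun i _ => hasDerivAt_auxE (-lam i) ht

lemma hasDerivAt_auxZd (ht : t ≠ 0) : HasDerivAt (fun s => auxZd lam s) (auxZdd lam t) t :=
  HasDerivAt.fun_sum fun i _ => hasDerivAt_auxE2 (-lam i) (- -lam i) ht

lemma hasDerivAt_auxN (T : ℝ) (ht : t ≠ 0) :
    HasDerivAt (fun s => auxN lam T s) (auxNd lam T t) t :=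
  HasDerivAt.fun_sum fun i _ => (hasDerivAt_auxE (-lam i / 2) ht).const_mul (auxE (-lam i / 2) T)

lemma hasDerivAt_auxNd (T : ℝ) (ht : t ≠ 0) :
    HasDerivAt (fun s => auxNd lam T s) (auxNdd lam T t) t :=
  HasDerivAt.fun_sum fun i _ =>
    (hasDerivAt_auxE2 (-lam i / 2) (- (-lam i / 2)) ht).const_mul (auxE (-lam i / 2) T)

lemma hasDerivAt_auxS1 (ht : t ≠ 0) : HasDerivAt (fun s => auxS1 lam s) (auxS1d lam t) t :=
  HasDerivAt.fun_sum fun i _ => (hasDerivAt_auxE (-lam i) ht).const_mul (lam i)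

lemma evq (l : ℝ) : auxE (-l / 2) t * auxE (-l / 2) t = auxE (-l) t := by
  unfold auxE
  rw [← Real.exp_add, ← add_div, add_halves]

lemma evN : auxN lam t t = auxZ lam t :=
  Finset.sum_congr rfl fun i _ => evq (lam i)

lemma evNd (ht : t ≠ 0) : auxNd lam t t = auxS1 lam t / (2 * t ^ 2) := by
  rw [auxNd, auxS1, Finset.sum_div]
  refine Finset.sum_congr rfl fun i _ => ?_
  rw [show auxE (-lam i / 2) t * (auxE (-lam i / 2) t * (- (-lam i / 2) / t ^ 2))
      = auxE (-lam i / 2) t * auxE (-lam i / 2) t * (- (-lam i / 2) / t ^ 2) by ring,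
    evq (lam i)]
  field_simp

lemma evZd (ht : t ≠ 0) : auxZd lam t = auxS1 lam t / t ^ 2 := by
  rw [auxZd, auxS1, Finset.sum_div]
  refine Finset.sum_congr rfl fun i _ => ?_
  field_simp

lemma evNdd (ht : t ≠ 0) :
    auxNdd lam t t = auxS2 lam t / (4 * t ^ 4) - auxS1 lam t / t ^ 3 := by
  rw [auxNdd, auxS2, auxS1, Finset.sum_div, Finset.sum_div, ← Finset.sum_sub_distrib]
  refine Finset.sum_congr rfl fun i _ => ?_
  rw [show (auxE (-lam i) t : ℝ) = auxE (-lam i / 2) t * auxE (-lam i / 2) t from (evq (lam i)).symm]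
  field_simp
  ring

lemma evZdd (ht : t ≠ 0) :
    auxZdd lam t = auxS2 lam t / t ^ 4 - 2 * auxS1 lam t / t ^ 3 := by
  rw [auxZdd, auxS2, auxS1, Finset.sum_div, Finset.mul_sum, Finset.sum_div,
    ← Finset.sum_sub_distrib]
  refine Finset.sum_congr rfl fun i _ => ?_
  field_simp
  ring

lemma evS1d (ht : t ≠ 0) : auxS1d lam t = auxS2 lam t / t ^ 2 := by
  rw [auxS1d, auxS2, Finset.sum_div]
  refine Finset.sum_congr rfl fun i _ => ?_
  field_simp

lemma auxZ_pos (lam : Fin n → ℝ) (t : ℝ) (hn : 0 < n) : 0 < auxZ lam t := by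
  have : Nonempty (Fin n) := Fin.pos_iff_nonempty.mp hn
  exact Finset.sum_pos (fun i _ => Real.exp_pos _) Finset.univ_nonempty

end analysis

/-! ### Matrix layer -/

variable {H : Matrix (Fin n) (Fin n) ℂ} (hherm : H.IsHermitian)

noncomputable def conjd (hherm : H.IsHermitian) (d : Fin n → ℝ) : Matrix (Fin n) (Fin n) ℂ :=
  (hherm.eigenvectorUnitary : Matrix (Fin n) (Fin n) ℂ) *
    Matrix.diagonal (fun i => (d i : ℂ)) *
    star (hherm.eigenvectorUnitary : Matrix (Fin n) (Fin n) ℂ)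

lemma star_mul_self_eigen :
    star (hherm.eigenvectorUnitary : Matrix (Fin n) (Fin n) ℂ) *
      (hherm.eigenvectorUnitary : Matrix (Fin n) (Fin n) ℂ) = 1 :=
  Matrix.mem_unitaryGroup_iff'.mp hherm.eigenvectorUnitary.2

lemma mul_star_self_eigen :
    (hherm.eigenvectorUnitary : Matrix (Fin n) (Fin n) ℂ) *
      star (hherm.eigenvectorUnitary : Matrix (Fin n) (Fin n) ℂ) = 1 :=
  Matrix.mem_unitaryGroup_iff.mp hherm.eigenvectorUnitary.2

lemma conjd_mul (d e : Fin n → ℝ) :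
    conjd hherm d * conjd hherm e = conjd hherm (fun i => d i * e i) := by
  unfold conjd
  rw [show ∀ A B C D E : Matrix (Fin n) (Fin n) ℂ, A * B * C * (A * D * E) = A * B * (C * A) * D * E
    from fun A B C D E => by noncomm_ring, star_mul_self_eigen hherm, mul_one,
    Matrix.mul_assoc _ (Matrix.diagonal _) (Matrix.diagonal _), Matrix.diagonal_mul_diagonal]
  norm_cast

lemma conjd_trace (d : Fin n → ℝ) :
    (conjd hherm d).trace = ((∑ i, d i : ℝ) : ℂ) := by
  unfold conjd
  rw [Matrix.trace_mul_cycle, star_mul_self_eigen hherm, Matrix.one_mul,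
    Matrix.trace_diagonal]
  push_cast
  rfl

lemma conjd_posSemidef {d : Fin n → ℝ} (hd : ∀ i, 0 ≤ d i) : (conjd hherm d).PosSemidef := by
  have h1 : (Matrix.diagonal (fun i => (d i : ℂ))).PosSemidef :=
    Matrix.posSemidef_diagonal_iff.mpr fun i => by
      simpa using Complex.zero_le_real.mpr (hd i)
  have := h1.mul_mul_conjTranspose_same
    (hherm.eigenvectorUnitary : Matrix (Fin n) (Fin n) ℂ)
  rwa [← Matrix.star_eq_conjTranspose] at this

open scoped MatrixOrder in
lemma conjd_msqrt {d : Fin n → ℝ} (hd : ∀ i, 0 ≤ d i) :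
    msqrt (conjd hherm d) = conjd hherm (fun i => Real.sqrt (d i)) := by
  have hps : (conjd hherm d).PosSemidef := conjd_posSemidef hherm hd
  have hps2 : (conjd hherm (fun i => Real.sqrt (d i))).PosSemidef :=
    conjd_posSemidef hherm fun i => Real.sqrt_nonneg _
  rw [msqrt, dif_pos hps]
  have e1 : ((hps.1.eigenvectorUnitary : Matrix (Fin n) (Fin n) ℂ) *
      diagonal ((↑) ∘ Real.sqrt ∘ hps.1.eigenvalues) *
      (star hps.1.eigenvectorUnitary : Matrix (Fin n) (Fin n) ℂ)) = cfc Real.sqrt (conjd hherm d) := by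
    rw [hps.1.cfc_eq, IsHermitian.cfc, Unitary.conjStarAlgAut_apply]
    rfl
  rw [e1, ← cfcₙ_eq_cfc, ← CFC.sqrt_eq_real_sqrt _ hps.nonneg]
  refine CFC.sqrt_unique ?_ hps2.nonneg
  rw [conjd_mul]
  have h : (fun i => Real.sqrt (d i) * Real.sqrt (d i)) = d :=
    funext fun i => Real.mul_self_sqrt (hd i)
  rw [h]

lemma H_eq_conjd : H = conjd hherm (hherm.eigenvalues) := by
  unfold conjd
  exact hherm.spectral_theorem

lemma exp_smul_eq (t : ℝ) (ht : t ≠ 0) :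
    NormedSpace.exp ((-(t : ℂ)⁻¹) • H)
      = conjd hherm (fun i => auxE (-(hherm.eigenvalues i)) t) := by
  have hUinv : (hherm.eigenvectorUnitary : Matrix (Fin n) (Fin n) ℂ)⁻¹
      = star (hherm.eigenvectorUnitary : Matrix (Fin n) (Fin n) ℂ) :=
    Matrix.inv_eq_left_inv (star_mul_self_eigen hherm)
  have hUnit : IsUnit (hherm.eigenvectorUnitary : Matrix (Fin n) (Fin n) ℂ) :=
    isUnit_iff_exists.mpr ⟨_, mul_star_self_eigen hherm, star_mul_self_eigen hherm⟩
  have key : (-(t : ℂ)⁻¹) • H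
      = (hherm.eigenvectorUnitary : Matrix (Fin n) (Fin n) ℂ) *
        Matrix.diagonal (fun i => ((-(hherm.eigenvalues i) / t : ℝ) : ℂ)) *
        (hherm.eigenvectorUnitary : Matrix (Fin n) (Fin n) ℂ)⁻¹ := by
    rw [hUinv]
    conv_lhs => rw [hherm.spectral_theorem]
    rw [Unitary.conjStarAlgAut_apply]
    rw [← smul_mul_assoc, ← mul_smul_comm, ← Matrix.diagonal_smul]
    have hfun : (-(t : ℂ)⁻¹) • (RCLike.ofReal ∘ hherm.eigenvalues)
        = fun i => ((-(hherm.eigenvalues i) / t : ℝ) : ℂ) := by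
      funext i
      simp only [Pi.smul_apply, Function.comp_apply, smul_eq_mul]
      push_cast
      field_simp
      rfl
    rw [hfun]
  rw [key, Matrix.exp_conj _ _ hUnit, Matrix.exp_diagonal, Pi.exp_def, hUinv]
  unfold conjd
  have hfun2 : (fun i => NormedSpace.exp (((-(hherm.eigenvalues i) / t : ℝ) : ℂ)))
      = fun i => ((auxE (-(hherm.eigenvalues i)) t : ℝ) : ℂ) := by
    funext i
    rw [← Complex.exp_eq_exp_ℂ, ← Complex.ofReal_exp]
    rfl
  rw [hfun2]

lemma trace_exp_smul (t : ℝ) (ht : t ≠ 0) :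
    (NormedSpace.exp ((-(t : ℂ)⁻¹) • H)).trace = ((auxZ hherm.eigenvalues t : ℝ) : ℂ) := by
  rw [exp_smul_eq hherm t ht, conjd_trace]
  rfl

lemma gibbs_eq_conjd (t : ℝ) (ht : 0 < t) (hn : 0 < n) :
    gibbs H t = conjd hherm
      (fun i => auxE (-(hherm.eigenvalues i)) t / auxZ hherm.eigenvalues t) := by
  have hZ : (0 : ℝ) < auxZ hherm.eigenvalues t := auxZ_pos _ _ hn
  rw [gibbs, trace_exp_smul hherm t ht.ne', exp_smul_eq hherm t ht.ne']
  unfold conjd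
  rw [← smul_mul_assoc, ← mul_smul_comm, ← Matrix.diagonal_smul]
  have hfun : (((auxZ hherm.eigenvalues t : ℝ) : ℂ))⁻¹ •
        (fun i => ((auxE (-(hherm.eigenvalues i)) t : ℝ) : ℂ))
      = fun i => ((auxE (-(hherm.eigenvalues i)) t / auxZ hherm.eigenvalues t : ℝ) : ℂ) := by
    funext i
    simp only [Pi.smul_apply, smul_eq_mul]
    push_cast
    ring
  rw [hfun]

lemma trace_H_gibbs (t : ℝ) (ht : 0 < t) (hn : 0 < n) :
    ((H * gibbs H t).trace).re = auxS1 hherm.eigenvalues t / auxZ hherm.eigenvalues t := by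
  rw [gibbs_eq_conjd hherm t ht hn]
  rw [show H * conjd hherm (fun i => auxE (-(hherm.eigenvalues i)) t / auxZ hherm.eigenvalues t)
      = conjd hherm hherm.eigenvalues *
        conjd hherm (fun i => auxE (-(hherm.eigenvalues i)) t / auxZ hherm.eigenvalues t) from by
    rw [← H_eq_conjd hherm]]
  rw [conjd_mul, conjd_trace, Complex.ofReal_re, auxS1, Finset.sum_div]
  exact Finset.sum_congr rfl fun i _ => by rw [mul_div_assoc]

lemma trace_H2_gibbs (t : ℝ) (ht : 0 < t) (hn : 0 < n) :
    ((H * H * gibbs H t).trace).re = auxS2 hherm.eigenvalues t / auxZ hherm.eigenvalues t := by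
  rw [gibbs_eq_conjd hherm t ht hn]
  rw [show H * H * conjd hherm (fun i => auxE (-(hherm.eigenvalues i)) t / auxZ hherm.eigenvalues t)
      = conjd hherm hherm.eigenvalues * conjd hherm hherm.eigenvalues *
        conjd hherm (fun i => auxE (-(hherm.eigenvalues i)) t / auxZ hherm.eigenvalues t) from by
    rw [← H_eq_conjd hherm]]
  rw [conjd_mul, conjd_mul, conjd_trace, Complex.ofReal_re, auxS2, Finset.sum_div]
  refine Finset.sum_congr rfl fun i _ => ?_
  rw [sq]
  ring

lemma fid_gibbs (t s : ℝ) (ht : 0 < t) (hs : 0 < s) (hn : 0 < n) :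
    Fid (gibbs H t) (gibbs H s)
      = (auxN hherm.eigenvalues t s) ^ 2
        / (auxZ hherm.eigenvalues t * auxZ hherm.eigenvalues s) := by
  have hZt : (0 : ℝ) < auxZ hherm.eigenvalues t := auxZ_pos _ _ hn
  have hZs : (0 : ℝ) < auxZ hherm.eigenvalues s := auxZ_pos _ _ hn
  have hpt : ∀ i, 0 ≤ auxE (-(hherm.eigenvalues i)) t / auxZ hherm.eigenvalues t := fun i =>
    div_nonneg (Real.exp_pos _).le hZt.le
  have hps : ∀ i, 0 ≤ auxE (-(hherm.eigenvalues i)) s / auxZ hherm.eigenvalues s := fun i =>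
    div_nonneg (Real.exp_pos _).le hZs.le
  rw [Fid, gibbs_eq_conjd hherm t ht hn, gibbs_eq_conjd hherm s hs hn,
    conjd_msqrt hherm hpt, conjd_mul, conjd_mul,
    conjd_msqrt hherm (fun i =>
      mul_nonneg (mul_nonneg (Real.sqrt_nonneg _) (hps i)) (Real.sqrt_nonneg _)),
    conjd_trace, Complex.ofReal_re]
  have hterm : ∀ i : Fin n,
      Real.sqrt (Real.sqrt (auxE (-(hherm.eigenvalues i)) t / auxZ hherm.eigenvalues t)
          * (auxE (-(hherm.eigenvalues i)) s / auxZ hherm.eigenvalues s)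
          * Real.sqrt (auxE (-(hherm.eigenvalues i)) t / auxZ hherm.eigenvalues t))
        = auxE (-(hherm.eigenvalues i) / 2) t * auxE (-(hherm.eigenvalues i) / 2) s
          / Real.sqrt (auxZ hherm.eigenvalues t * auxZ hherm.eigenvalues s) := by
    intro i
    rw [mul_right_comm, Real.mul_self_sqrt (hpt i)]
    rw [show auxE (-(hherm.eigenvalues i)) t / auxZ hherm.eigenvalues t
          * (auxE (-(hherm.eigenvalues i)) s / auxZ hherm.eigenvalues s)
        = (auxE (-(hherm.eigenvalues i) / 2) t * auxE (-(hherm.eigenvalues i) / 2) s) ^ 2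
          / (auxZ hherm.eigenvalues t * auxZ hherm.eigenvalues s) from by
      rw [mul_pow, sq, sq, evq, evq]; ring]
    rw [Real.sqrt_div (sq_nonneg _), Real.sqrt_sq
      (show (0:ℝ) ≤ auxE (-(hherm.eigenvalues i) / 2) t * auxE (-(hherm.eigenvalues i) / 2) s from
        mul_nonneg (Real.exp_pos _).le (Real.exp_pos _).le)]
  have h1 : (∑ i, Real.sqrt (Real.sqrt (auxE (-(hherm.eigenvalues i)) t / auxZ hherm.eigenvalues t)
          * (auxE (-(hherm.eigenvalues i)) s / auxZ hherm.eigenvalues s)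
          * Real.sqrt (auxE (-(hherm.eigenvalues i)) t / auxZ hherm.eigenvalues t)))
      = ∑ i, (auxE (-(hherm.eigenvalues i) / 2) t * auxE (-(hherm.eigenvalues i) / 2) s)
          / Real.sqrt (auxZ hherm.eigenvalues t * auxZ hherm.eigenvalues s) :=
    Finset.sum_congr rfl fun i _ => hterm i
  rw [h1, ← Finset.sum_div, div_pow, Real.sq_sqrt (mul_nonneg hZt.le hZs.le)]
  rfl

/-- For thermometry of a Gibbs state of a non-scalar Hamiltonian, energy
measurement (projective measurement on the eigenstates of `H`) achieves the QFI exactly. -/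
theorem stmt3 {n : ℕ} (H : Matrix (Fin n) (Fin n) ℂ) (hherm : H.IsHermitian)
    (hns : ¬ ∃ c : ℂ, H = c • (1 : Matrix (Fin n) (Fin n) ℂ)) :
    ∀ T : ℝ, 0 < T →
      (deriv (fun T' => ((H * gibbs H T').trace).re) T) ^ 2 /
          (((H * H * gibbs H T).trace).re - (((H * gibbs H T).trace).re) ^ 2)
        = QFI (fun T' => gibbs H T') T := by
  intro T hT
  rcases Nat.eq_zero_or_pos n with hn0 | hn
  · exfalso
    apply hns
    subst hn0
    exact ⟨0, by ext i j; exact i.elim0⟩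
  set lam := hherm.eigenvalues with hlam
  have hT0 : T ≠ 0 := hT.ne'
  have hZT : (0 : ℝ) < auxZ lam T := auxZ_pos lam T hn
  -- LHS derivative
  have hEeq : (fun T' => ((H * gibbs H T').trace).re) =ᶠ[𝓝 T]
      (fun t => auxS1 lam t / auxZ lam t) :=
    eventually_of_mem (isOpen_Ioi.mem_nhds hT) (fun t ht' => trace_H_gibbs hherm t ht' hn)
  have hDE : HasDerivAt (fun t => auxS1 lam t / auxZ lam t)
      ((auxS1d lam T * auxZ lam T - auxS1 lam T * auxZd lam T) / auxZ lam T ^ 2) T :=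
    (hasDerivAt_auxS1 hT0).div (hasDerivAt_auxZ hT0) hZT.ne'
  have hderivL : deriv (fun T' => ((H * gibbs H T').trace).re) T
      = (auxS1d lam T * auxZ lam T - auxS1 lam T * auxZd lam T) / auxZ lam T ^ 2 :=
    hEeq.deriv_eq.trans hDE.deriv
  -- fidelity curve
  have hO : IsOpen {ε : ℝ | 0 < T + ε} := isOpen_lt continuous_const (by fun_prop)
  have h0O : (0 : ℝ) ∈ {ε : ℝ | 0 < T + ε} := by simpa using hT
  set Gf : ℝ → ℝ := fun s => auxN lam T s ^ 2 / (auxZ lam T * auxZ lam s) with hGf_def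
  set Gd : ℝ → ℝ := fun s =>
    (2 * auxN lam T s * auxNd lam T s * auxZ lam s - auxN lam T s ^ 2 * auxZd lam s)
      / (auxZ lam T * auxZ lam s ^ 2) with hGd_def
  have hGf : ∀ s, 0 < s → HasDerivAt Gf (Gd s) s := by
    intro s hs
    have hZs : (0 : ℝ) < auxZ lam s := auxZ_pos lam s hn
    have h := ((hasDerivAt_auxN (lam := lam) T hs.ne').pow 2).div
      ((hasDerivAt_auxZ (lam := lam) hs.ne').const_mul (auxZ lam T))
      (mul_ne_zero hZT.ne' hZs.ne')
    refine h.congr_deriv ?_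
    simp only [Pi.pow_apply, Pi.mul_apply, Pi.sub_apply]
    rw [hGd_def]
    field_simp
    ring
  set Wfinal : ℝ := -(auxS2 lam T * auxZ lam T - auxS1 lam T ^ 2)
      / (2 * auxZ lam T ^ 2 * T ^ 4) with hWfinal_def
  have hGdT : HasDerivAt Gd Wfinal T := by
    have hu := ((((hasDerivAt_auxN (lam := lam) T hT0).const_mul 2).mul
        (hasDerivAt_auxNd (lam := lam) T hT0)).mul (hasDerivAt_auxZ (lam := lam) hT0)).sub
      (((hasDerivAt_auxN (lam := lam) T hT0).pow 2).mul (hasDerivAt_auxZd (lam := lam) hT0))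
    have hv := ((hasDerivAt_auxZ (lam := lam) hT0).pow 2).const_mul (auxZ lam T)
    have h := hu.div hv (by
      have := hZT
      exact mul_ne_zero hZT.ne' (pow_ne_zero 2 hZT.ne'))
    refine h.congr_deriv ?_
    simp only [Pi.pow_apply, Pi.mul_apply, Pi.sub_apply]
    rw [hWfinal_def, evN, evNd hT0, evNdd hT0, evZd hT0, evZdd hT0]
    field_simp
    ring
  have hFid : ∀ ε ∈ {ε : ℝ | 0 < T + ε},
      Fid (gibbs H T) (gibbs H (T + ε)) = Gf (T + ε) := fun ε hε =>
    fid_gibbs hherm T (T + ε) hT hε hn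
  have hshift : ∀ ε : ℝ, HasDerivAt (fun x : ℝ => T + x) 1 ε := fun ε =>
    (hasDerivAt_id ε).const_add T
  have hD1 : ∀ ε ∈ {ε : ℝ | 0 < T + ε},
      deriv (fun e => Fid (gibbs H T) (gibbs H (T + e))) ε = Gd (T + ε) := by
    intro ε hε
    have hW : HasDerivAt (fun e => Gf (T + e)) (Gd (T + ε) * 1) ε :=
      (hGf _ hε).comp ε (hshift ε)
    have heq : (fun e => Fid (gibbs H T) (gibbs H (T + e))) =ᶠ[𝓝 ε]
        (fun e => Gf (T + e)) := eventually_of_mem (hO.mem_nhds hε) hFid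
    rw [heq.deriv_eq, hW.deriv, mul_one]
  have hD2 : deriv (deriv (fun e => Fid (gibbs H T) (gibbs H (T + e)))) 0 = Wfinal := by
    have heq2 : deriv (fun e => Fid (gibbs H T) (gibbs H (T + e))) =ᶠ[𝓝 0]
        (fun e => Gd (T + e)) := eventually_of_mem (hO.mem_nhds h0O) hD1
    have hGdT0 : HasDerivAt Gd Wfinal (T + 0) := by rwa [add_zero]
    have hW2 : HasDerivAt (fun e => Gd (T + e)) (Wfinal * 1) 0 := hGdT0.comp 0 (hshift 0)
    rw [heq2.deriv_eq, hW2.deriv, mul_one]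
  simp only [QFI]
  rw [show iteratedDeriv 2 (fun ε => Fid (gibbs H T) (gibbs H (T + ε))) 0
      = deriv (deriv (fun ε => Fid (gibbs H T) (gibbs H (T + ε)))) 0 from by
    rw [show (2 : ℕ) = 1 + 1 from rfl, iteratedDeriv_succ, iteratedDeriv_one]]
  rw [hD2, hderivL, trace_H_gibbs hherm T hT hn, trace_H2_gibbs hherm T hT hn,
    evS1d hT0, evZd hT0, hWfinal_def]
  have hnum : (auxS2 lam T / T ^ 2 * auxZ lam T - auxS1 lam T * (auxS1 lam T / T ^ 2))
        / auxZ lam T ^ 2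
      = (auxS2 lam T * auxZ lam T - auxS1 lam T ^ 2) / (T ^ 2 * auxZ lam T ^ 2) := by
    field_simp
  have hden : auxS2 lam T / auxZ lam T - (auxS1 lam T / auxZ lam T) ^ 2
      = (auxS2 lam T * auxZ lam T - auxS1 lam T ^ 2) / auxZ lam T ^ 2 := by
    field_simp
  rw [hnum, hden]
  set d : ℝ := auxS2 lam T * auxZ lam T - auxS1 lam T ^ 2 with hd_def
  rcases eq_or_ne d 0 with hd | hd
  · rw [hd]
    simp
  · rw [div_pow]
    field_simp
end

section
/- Let H be an n×n Hermitian matrix over ℂ and for T > 0 let ρ_T = exp(-H/T)/Tr[exp(-H/T)] be the Gibbs state. Then the quantum Fisher information F(T) of the family T ↦ ρ_T at T equals the energy variance divided by T⁴: F(T) = (Tr[H² ρ_T] − (Tr[H ρ_T])²)/T⁴ for every T > 0 (equivalently, F(T) = C(T)/T² with heat capacity C(T) = ∂_T Tr[H ρ_T]). -/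
open scoped Classical

open Matrix Filter Asymptotics ComplexOrder

/-! ### Auxiliary scalar framework -/

open Topology

section scalar
variable {n : ℕ} (lam : Fin n → ℝ)

noncomputable def wf (i : Fin n) (t : ℝ) : ℝ := Real.exp (-(lam i) / t)
noncomputable def Zf (t : ℝ) : ℝ := ∑ i, wf lam i t
noncomputable def pf (i : Fin n) (t : ℝ) : ℝ := wf lam i t / Zf lam t
noncomputable def rf (i : Fin n) (t : ℝ) : ℝ := lam i / t ^ 2
noncomputable def dZf (t : ℝ) : ℝ := ∑ i, wf lam i t * rf lam i t
noncomputable def dpf (i : Fin n) (t : ℝ) : ℝ :=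
  (wf lam i t * rf lam i t * Zf lam t - wf lam i t * dZf lam t) / Zf lam t ^ 2

variable {lam}

lemma wf_pos (i : Fin n) (t : ℝ) : 0 < wf lam i t := Real.exp_pos _

lemma Zf_pos (hn : 0 < n) (t : ℝ) : 0 < Zf lam t :=
  Finset.sum_pos (fun i _ => wf_pos i t) ⟨⟨0, hn⟩, Finset.mem_univ _⟩

lemma pf_pos (hn : 0 < n) (i : Fin n) (t : ℝ) : 0 < pf lam i t :=
  div_pos (wf_pos i t) (Zf_pos hn t)

lemma sum_pf (hn : 0 < n) (t : ℝ) : ∑ i, pf lam i t = 1 := by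
  have hZ := (Zf_pos (lam := lam) hn t).ne'
  simp only [pf]
  rw [← Finset.sum_div, show ∑ i, wf lam i t = Zf lam t from rfl, div_self hZ]

lemma sum_dpf (hn : 0 < n) (t : ℝ) : ∑ i, dpf lam i t = 0 := by
  have hZ := (Zf_pos (lam := lam) hn t).ne'
  simp only [dpf]
  rw [← Finset.sum_div]
  rw [Finset.sum_sub_distrib, ← Finset.sum_mul, ← Finset.sum_mul,
    show ∑ i, wf lam i t * rf lam i t = dZf lam t from rfl,
    show ∑ i, wf lam i t = Zf lam t from rfl]
  rw [mul_comm (Zf lam t) (dZf lam t)]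
  simp

lemma hasDerivAt_wf (i : Fin n) {t : ℝ} (ht : t ≠ 0) :
    HasDerivAt (wf lam i) (wf lam i t * rf lam i t) t := by
  have h1 : HasDerivAt (fun s : ℝ => -(lam i) / s) (rf lam i t) t := by
    have h := (hasDerivAt_inv ht).const_mul (-(lam i))
    simp only [div_eq_mul_inv]
    refine h.congr_deriv ?_
    rw [rf]
    field_simp
  exact h1.exp

lemma hasDerivAt_Zf {t : ℝ} (ht : t ≠ 0) : HasDerivAt (Zf lam) (dZf lam t) t :=
  HasDerivAt.fun_sum fun i _ => hasDerivAt_wf i ht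

lemma hasDerivAt_pf (hn : 0 < n) (i : Fin n) {t : ℝ} (ht : t ≠ 0) :
    HasDerivAt (pf lam i) (dpf lam i t) t :=
  (hasDerivAt_wf i ht).div (hasDerivAt_Zf ht) (Zf_pos hn t).ne'

lemma hasDerivAt_rf (i : Fin n) {t : ℝ} (ht : t ≠ 0) :
    HasDerivAt (rf lam i) ((0 * t ^ 2 - lam i * (2 * t ^ 1)) / (t ^ 2) ^ 2) t :=
  (hasDerivAt_const t (lam i)).div (hasDerivAt_pow 2 t) (pow_ne_zero 2 ht)

lemma hasDerivAt_dZf {t : ℝ} (ht : t ≠ 0) :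
    HasDerivAt (dZf lam)
      (∑ i, (wf lam i t * rf lam i t * rf lam i t +
        wf lam i t * ((0 * t ^ 2 - lam i * (2 * t ^ 1)) / (t ^ 2) ^ 2))) t :=
  HasDerivAt.fun_sum fun i _ => (hasDerivAt_wf i ht).mul (hasDerivAt_rf i ht)

lemma exists_hasDerivAt_dpf (hn : 0 < n) (i : Fin n) {t : ℝ} (ht : t ≠ 0) :
    ∃ c, HasDerivAt (dpf lam i) c t := by
  have hw := hasDerivAt_wf (lam := lam) i ht
  have hr := hasDerivAt_rf (lam := lam) i ht
  have hZ := hasDerivAt_Zf (lam := lam) ht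
  have hdZ := hasDerivAt_dZf (lam := lam) ht
  have hnum := ((hw.mul hr).mul hZ).sub (hw.mul hdZ)
  have hden := hZ.pow 2
  exact ⟨_, hnum.div hden (pow_ne_zero 2 (Zf_pos hn t).ne')⟩

theorem scalar_main (hn : 0 < n) {T : ℝ} (hT : 0 < T) (D2 : Fin n → ℝ)
    (hD2 : ∀ i, HasDerivAt (dpf lam i) (D2 i) T) :
    iteratedDeriv 2 (fun ε => (∑ i, Real.sqrt (pf lam i T * pf lam i (T + ε))) ^ 2) 0
      = -(1 / 2) * ∑ i, dpf lam i T ^ 2 / pf lam i T := by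
  set g : ℝ → ℝ := fun ε => ∑ i, Real.sqrt (pf lam i T * pf lam i (T + ε)) with hg_def
  set g1 : ℝ → ℝ := fun ε => ∑ i,
    pf lam i T * dpf lam i (T + ε) / (2 * Real.sqrt (pf lam i T * pf lam i (T + ε))) with hg1_def
  have harg_pos : ∀ (i : Fin n) (ε : ℝ), 0 < pf lam i T * pf lam i (T + ε) :=
    fun i ε => mul_pos (pf_pos hn i T) (pf_pos hn i (T + ε))
  have hq : ∀ (i : Fin n) (ε : ℝ), T + ε ≠ 0 →
      HasDerivAt (fun ε => pf lam i (T + ε)) (dpf lam i (T + ε)) ε := by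
    intro i ε hε
    have h := (hasDerivAt_pf (lam := lam) hn i hε).comp ε ((hasDerivAt_id ε).const_add T)
    simpa [Function.comp_def] using h
  have hterm : ∀ (i : Fin n) (ε : ℝ), T + ε ≠ 0 →
      HasDerivAt (fun ε => Real.sqrt (pf lam i T * pf lam i (T + ε)))
        (pf lam i T * dpf lam i (T + ε) / (2 * Real.sqrt (pf lam i T * pf lam i (T + ε)))) ε :=
    fun i ε hε => ((hq i ε hε).const_mul (pf lam i T)).sqrt (harg_pos i ε).ne'
  have hg : ∀ ε : ℝ, T + ε ≠ 0 → HasDerivAt g (g1 ε) ε :=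
    fun ε hε => HasDerivAt.fun_sum fun i _ => hterm i ε hε
  have hmT : (-T : ℝ) < 0 := by linarith
  have hderiv_eq : deriv (fun ε => g ε ^ 2) =ᶠ[𝓝 (0 : ℝ)] fun ε => 2 * g ε ^ 1 * g1 ε := by
    filter_upwards [eventually_gt_nhds hmT] with ε hε
    rw [((hg ε (by linarith)).fun_pow 2).deriv]
    norm_num
  have h2 : iteratedDeriv 2 (fun ε => g ε ^ 2) 0 = deriv (fun ε => 2 * g ε ^ 1 * g1 ε) 0 := by
    rw [iteratedDeriv_succ, iteratedDeriv_one]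
    exact hderiv_eq.deriv_eq
  have hq0 : ∀ i : Fin n, HasDerivAt (fun ε => dpf lam i (T + ε)) (D2 i) 0 := by
    intro i
    have hD2' : HasDerivAt (dpf lam i) (D2 i) (T + 0) := by rw [add_zero]; exact hD2 i
    have h := hD2'.comp (0 : ℝ) ((hasDerivAt_id (0 : ℝ)).const_add T)
    simpa [Function.comp_def] using h
  have hTne : T + (0 : ℝ) ≠ 0 := by simp [hT.ne']
  have hsqrt0 : ∀ i : Fin n, Real.sqrt (pf lam i T * pf lam i (T + 0)) = pf lam i T := by
    intro i
    rw [add_zero, Real.sqrt_mul_self (pf_pos hn i T).le]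
  have hvival : ∀ i : Fin n, HasDerivAt
      (fun ε => pf lam i T * dpf lam i (T + ε) / (2 * Real.sqrt (pf lam i T * pf lam i (T + ε))))
      (D2 i / 2 - (dpf lam i T ^ 2 / pf lam i T) / 4) 0 := by
    intro i
    have hu : HasDerivAt (fun ε => pf lam i T * dpf lam i (T + ε)) (pf lam i T * D2 i) 0 :=
      (hq0 i).const_mul _
    have hden : HasDerivAt (fun ε => 2 * Real.sqrt (pf lam i T * pf lam i (T + ε)))
        (2 * (pf lam i T * dpf lam i (T + 0) /
          (2 * Real.sqrt (pf lam i T * pf lam i (T + 0))))) 0 :=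
      (hterm i 0 hTne).const_mul 2
    have hdne : 2 * Real.sqrt (pf lam i T * pf lam i (T + 0)) ≠ 0 := by
      rw [hsqrt0 i]
      have := pf_pos (lam := lam) hn i T
      positivity
    have h := hu.div hden hdne
    refine h.congr_deriv ?_
    rw [hsqrt0 i, add_zero]
    have hp := (pf_pos (lam := lam) hn i T).ne'
    field_simp
    ring
  have hg1_0 : HasDerivAt g1 (∑ i, (D2 i / 2 - (dpf lam i T ^ 2 / pf lam i T) / 4)) 0 :=
    HasDerivAt.fun_sum fun i _ => hvival i
  have hg_0 : HasDerivAt g (g1 0) 0 := hg 0 (by simpa using hT.ne')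
  have hf1 : HasDerivAt (fun ε => 2 * g ε ^ 1 * g1 ε)
      (2 * ((1 : ℕ) * g 0 ^ 0 * g1 0) * g1 0 +
        2 * g 0 ^ 1 * (∑ i, (D2 i / 2 - (dpf lam i T ^ 2 / pf lam i T) / 4))) 0 := by
    exact ((hg_0.fun_pow 1).const_mul 2).mul hg1_0
  have hg0 : g 0 = 1 := by
    simp only [hg_def]
    rw [Finset.sum_congr rfl fun i _ => hsqrt0 i, sum_pf hn]
  have hg10 : g1 0 = 0 := by
    simp only [hg1_def]
    have : ∀ i : Fin n, pf lam i T * dpf lam i (T + 0) /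
        (2 * Real.sqrt (pf lam i T * pf lam i (T + 0))) = dpf lam i T / 2 := by
      intro i
      rw [hsqrt0 i, add_zero]
      have hp := (pf_pos (lam := lam) hn i T).ne'
      field_simp
    rw [Finset.sum_congr rfl fun i _ => this i, ← Finset.sum_div, sum_dpf hn, zero_div]
  have hsumD2 : ∑ i, D2 i = 0 := by
    have hs : HasDerivAt (fun t => ∑ i, dpf lam i t) (∑ i, D2 i) T :=
      HasDerivAt.fun_sum fun i _ => hD2 i
    have hzero : (fun t => ∑ i, dpf lam i t) = fun _ => (0 : ℝ) :=
      funext fun t => sum_dpf hn t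
    rw [hzero] at hs
    exact hs.unique (hasDerivAt_const T 0)
  rw [h2, hf1.deriv, hg0, hg10, Finset.sum_sub_distrib, ← Finset.sum_div, ← Finset.sum_div,
    hsumD2]
  ring
end scalar

section alg
variable {n : ℕ} {lam : Fin n → ℝ}

lemma dZf_eq {T : ℝ} : dZf lam T = (∑ i, wf lam i T * lam i) / T ^ 2 := by
  rw [dZf, Finset.sum_div]
  exact Finset.sum_congr rfl fun i _ => by rw [rf, mul_div_assoc]

lemma sum_mul_pf (T : ℝ) (c : Fin n → ℝ) :
    ∑ i, c i * pf lam i T = (∑ i, wf lam i T * c i) / Zf lam T := by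
  rw [Finset.sum_div]
  exact Finset.sum_congr rfl fun i _ => by rw [pf]; ring

lemma sum_alg (hn : 0 < n) {T : ℝ} (hT : T ≠ 0) :
    ∑ i, dpf lam i T ^ 2 / pf lam i T
      = ((∑ i, lam i ^ 2 * pf lam i T) - (∑ i, lam i * pf lam i T) ^ 2) / T ^ 4 := by
  set Z := Zf lam T with hZdef
  set S1 := ∑ i, wf lam i T * lam i with hS1
  set S2 := ∑ i, wf lam i T * lam i ^ 2 with hS2
  have hZ := (Zf_pos (lam := lam) hn T).ne'
  have hperi : ∀ i : Fin n, dpf lam i T ^ 2 / pf lam i T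
      = wf lam i T * (lam i * Z - S1) ^ 2 / (T ^ 4 * Z ^ 3) := by
    intro i
    have hw := (wf_pos (lam := lam) i T).ne'
    rw [dpf, pf, rf, dZf_eq, ← hZdef, ← hS1]
    field_simp
  rw [Finset.sum_congr rfl fun i _ => hperi i, ← Finset.sum_div]
  have hexp : ∑ i, wf lam i T * (lam i * Z - S1) ^ 2 = Z ^ 2 * S2 - Z * S1 ^ 2 := by
    have h : ∀ i : Fin n, wf lam i T * (lam i * Z - S1) ^ 2
        = Z ^ 2 * (wf lam i T * lam i ^ 2) - 2 * Z * S1 * (wf lam i T * lam i)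
          + S1 ^ 2 * wf lam i T := fun i => by ring
    rw [Finset.sum_congr rfl fun i _ => h i, Finset.sum_add_distrib, Finset.sum_sub_distrib,
      ← Finset.mul_sum, ← Finset.mul_sum, ← Finset.mul_sum, ← hS1, ← hS2,
      show (∑ i, wf lam i T) = Z from rfl]
    ring
  rw [hexp, sum_mul_pf T (fun i => lam i ^ 2), sum_mul_pf T (fun i => lam i), ← hZdef,
    ← hS1, ← hS2]
  field_simp

lemma sum_alg2 (hn : 0 < n) {T : ℝ} (hT : T ≠ 0) :
    ∑ i, lam i * dpf lam i T
      = ((∑ i, lam i ^ 2 * pf lam i T) - (∑ i, lam i * pf lam i T) ^ 2) / T ^ 2 := by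
  set Z := Zf lam T with hZdef
  set S1 := ∑ i, wf lam i T * lam i with hS1
  set S2 := ∑ i, wf lam i T * lam i ^ 2 with hS2
  have hZ := (Zf_pos (lam := lam) hn T).ne'
  have hperi : ∀ i : Fin n, lam i * dpf lam i T
      = wf lam i T * lam i * (lam i * Z - S1) / (T ^ 2 * Z ^ 2) := by
    intro i
    rw [dpf, rf, dZf_eq, ← hZdef, ← hS1]
    field_simp
  rw [Finset.sum_congr rfl fun i _ => hperi i, ← Finset.sum_div]
  have hexp : ∑ i, wf lam i T * lam i * (lam i * Z - S1) = Z * S2 - S1 ^ 2 := by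
    have h : ∀ i : Fin n, wf lam i T * lam i * (lam i * Z - S1)
        = Z * (wf lam i T * lam i ^ 2) - S1 * (wf lam i T * lam i) := fun i => by ring
    rw [Finset.sum_congr rfl fun i _ => h i, Finset.sum_sub_distrib,
      ← Finset.mul_sum, ← Finset.mul_sum, ← hS1, ← hS2]
    ring
  rw [hexp, sum_mul_pf T (fun i => lam i ^ 2), sum_mul_pf T (fun i => lam i), ← hZdef,
    ← hS1, ← hS2]
  field_simp
end alg

/-! ### Matrix lemmas -/

section matrixlemmas
variable {n : ℕ} (V : Matrix (Fin n) (Fin n) ℂ)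

theorem conj_mul_conj (hUV : star V * V = 1) (D1 D2 : Matrix (Fin n) (Fin n) ℂ) :
    (V * D1 * star V) * (V * D2 * star V) = V * (D1 * D2) * star V := by
  simp only [mul_assoc]; rw [← mul_assoc (star V) V, hUV, one_mul]

theorem conj_trace (hUV : star V * V = 1) (D : Matrix (Fin n) (Fin n) ℂ) :
    (V * D * star V).trace = D.trace := by
  rw [trace_mul_cycle, hUV, one_mul]

theorem conj_psd (hUV : star V * V = 1) (x : Fin n → ℝ) (hx : ∀ i, 0 ≤ x i) :
    (V * diagonal (fun i => (x i : ℂ)) * star V).PosSemidef := by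
  have hd : (diagonal (fun i => (x i : ℂ))).PosSemidef :=
    posSemidef_diagonal_iff.mpr fun i => by
      simpa using Complex.zero_le_real.mpr (hx i)
  exact hd.mul_mul_conjTranspose_same V

theorem msqrt_conj (hUV : star V * V = 1) (x : Fin n → ℝ) (hx : ∀ i, 0 ≤ x i) :
    msqrt (V * diagonal (fun i => (x i : ℂ)) * star V)
      = V * diagonal (fun i => ((Real.sqrt (x i) : ℝ) : ℂ)) * star V := by
  have hA : (V * diagonal (fun i => (x i : ℂ)) * star V).PosSemidef := conj_psd V hUV x hx
  have hB : (V * diagonal (fun i => ((Real.sqrt (x i) : ℝ) : ℂ)) * star V).PosSemidef :=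
    conj_psd V hUV _ fun i => Real.sqrt_nonneg _
  have hsq : (V * diagonal (fun i => ((Real.sqrt (x i) : ℝ) : ℂ)) * star V) ^ 2
      = V * diagonal (fun i => (x i : ℂ)) * star V := by
    rw [pow_two, conj_mul_conj V hUV, diagonal_mul_diagonal]
    have : (fun i => ((Real.sqrt (x i) : ℝ) : ℂ) * ((Real.sqrt (x i) : ℝ) : ℂ))
        = fun i => ((x i : ℝ) : ℂ) := funext fun i => by
      rw [← Complex.ofReal_mul, Real.mul_self_sqrt (hx i)]
    rw [this]
  rw [msqrt, dif_pos hA]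
  have e1 : (hA.1.eigenvectorUnitary : Matrix (Fin n) (Fin n) ℂ) *
      diagonal ((↑) ∘ Real.sqrt ∘ hA.1.eigenvalues) *
      (star hA.1.eigenvectorUnitary : Matrix (Fin n) (Fin n) ℂ) = hA.1.cfc Real.sqrt := by
    simp only [IsHermitian.cfc, Unitary.conjStarAlgAut_apply]; rfl
  open scoped MatrixOrder in
  rw [e1, ← hA.1.cfc_eq, ← cfcₙ_eq_cfc (hf0 := Real.sqrt_zero),
    ← CFC.sqrt_eq_real_sqrt _ hA.nonneg]
  open scoped MatrixOrder in
  exact CFC.sqrt_unique (by rw [← pow_two]; exact hsq) hB.nonneg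

theorem exp_smul_conj (hUV : star V * V = 1) (hVU : V * star V = 1)
    (lam : Fin n → ℝ) (t : ℝ) :
    NormedSpace.exp ((-(t : ℂ)⁻¹) • (V * diagonal (fun i => ((lam i : ℝ) : ℂ)) * star V))
      = V * diagonal (fun i => ((Real.exp (-(lam i) / t) : ℝ) : ℂ)) * star V := by
  by_cases ht : t = 0
  · subst ht
    simp only [Complex.ofReal_zero, _root_.inv_zero, neg_zero, zero_smul, NormedSpace.exp_zero,
      div_zero, Real.exp_zero, Complex.ofReal_one, diagonal_one, mul_one, hVU]
  have hinv : V⁻¹ = star V := Matrix.inv_eq_left_inv hUV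
  have hunit : IsUnit V := ⟨⟨V, star V, hVU, hUV⟩, rfl⟩
  have h1 : (-(t : ℂ)⁻¹) • (V * diagonal (fun i => ((lam i : ℝ) : ℂ)) * star V)
      = V * diagonal (fun i => ((-(lam i) / t : ℝ) : ℂ)) * V⁻¹ := by
    rw [hinv]
    have h2 : (fun i => ((-lam i / t : ℝ) : ℂ)) = (-(t : ℂ)⁻¹) • fun i => ((lam i : ℝ) : ℂ) :=
      funext fun i => by
        simp only [Pi.smul_apply, smul_eq_mul]
        push_cast
        field_simp
    rw [h2, diagonal_smul, Matrix.mul_smul, Matrix.smul_mul]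
  rw [h1, Matrix.exp_conj V _ hunit, Matrix.exp_diagonal, hinv, Pi.exp_def]
  have h3 : (fun i => NormedSpace.exp ((-lam i / t : ℝ) : ℂ))
      = fun i => ((Real.exp (-(lam i) / t) : ℝ) : ℂ) := funext fun i => by
    rw [← Complex.exp_eq_exp_ℂ, Complex.ofReal_exp]
  rw [h3]

theorem trace_conj_diag (hUV : star V * V = 1) (x : Fin n → ℝ) :
    ((V * diagonal (fun i => ((x i : ℝ) : ℂ)) * star V).trace) = ((∑ i, x i : ℝ) : ℂ) := by
  rw [conj_trace V hUV, trace_diagonal, Complex.ofReal_sum]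

theorem gibbs_eq (hn : 0 < n) (hUV : star V * V = 1) (hVU : V * star V = 1)
    (lam : Fin n → ℝ) (t : ℝ) :
    gibbs (V * diagonal (fun i => ((lam i : ℝ) : ℂ)) * star V) t
      = V * diagonal (fun i => ((pf lam i t : ℝ) : ℂ)) * star V := by
  rw [gibbs, exp_smul_conj V hUV hVU, trace_conj_diag V hUV]
  have h2 : (fun i => ((pf lam i t : ℝ) : ℂ))
      = (((∑ i, Real.exp (-(lam i) / t) : ℝ) : ℂ))⁻¹ •
          fun i => ((Real.exp (-(lam i) / t) : ℝ) : ℂ) :=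
    funext fun i => by
      simp only [pf, wf, Zf, Pi.smul_apply, smul_eq_mul]
      push_cast
      rw [div_eq_mul_inv, mul_comm]
  rw [h2, diagonal_smul, Matrix.mul_smul, Matrix.smul_mul]

theorem fid_conj (hUV : star V * V = 1) (a b : Fin n → ℝ)
    (ha : ∀ i, 0 ≤ a i) (hb : ∀ i, 0 ≤ b i) :
    Fid (V * diagonal (fun i => ((a i : ℝ) : ℂ)) * star V)
        (V * diagonal (fun i => ((b i : ℝ) : ℂ)) * star V)
      = (∑ i, Real.sqrt (a i * b i)) ^ 2 := by
  rw [Fid, msqrt_conj V hUV a ha, conj_mul_conj V hUV, conj_mul_conj V hUV,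
    diagonal_mul_diagonal, diagonal_mul_diagonal]
  have h1 : (fun i => ((Real.sqrt (a i) : ℝ) : ℂ) * ((b i : ℝ) : ℂ) * ((Real.sqrt (a i) : ℝ) : ℂ))
      = fun i => ((a i * b i : ℝ) : ℂ) := funext fun i => by
    rw [mul_comm (Real.sqrt (a i) : ℂ) (b i : ℂ), mul_assoc, ← Complex.ofReal_mul,
      Real.mul_self_sqrt (ha i)]
    push_cast
    ring
  rw [h1, msqrt_conj V hUV _ (fun i => mul_nonneg (ha i) (hb i)), trace_conj_diag V hUV]
  simp

end matrixlemmas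

/-- The thermometry QFI of a Gibbs state equals the energy variance over `T⁴`;
equivalently `F(T) = C(T)/T²` with heat capacity `C(T) = ∂_T Tr[H ρ_T]`. -/
theorem stmt9 {n : ℕ} (H : Matrix (Fin n) (Fin n) ℂ) (hherm : H.IsHermitian) :
    ∀ T : ℝ, 0 < T →
      QFI (fun T' => gibbs H T') T =
        (((H * H * gibbs H T).trace).re - (((H * gibbs H T).trace).re) ^ 2) / T ^ 4 ∧
      QFI (fun T' => gibbs H T') T =
        (deriv (fun T' => ((H * gibbs H T').trace).re) T) / T ^ 2 := by
  intro T hT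
  rcases Nat.eq_zero_or_pos n with hn | hn
  · -- trivial case `n = 0`: all traces vanish
    subst hn
    have htr : ∀ A : Matrix (Fin 0) (Fin 0) ℂ, A.trace = 0 := fun A => by
      simp [Matrix.trace]
    have hFid : (fun ε => Fid (gibbs H T) (gibbs H (T + ε))) = fun _ => (0 : ℝ) :=
      funext fun ε => by simp [Fid, htr]
    have hQ : QFI (fun T' => gibbs H T') T = 0 := by
      rw [QFI, hFid]
      simp [iteratedDeriv_succ, iteratedDeriv_zero]
    have hd : (fun T' => ((H * gibbs H T').trace).re) = fun _ => (0 : ℝ) :=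
      funext fun t => by rw [htr]; simp
    constructor
    · rw [hQ, htr, htr]
      simp
    · rw [hQ, hd]
      simp
  · -- main case
    set lam : Fin n → ℝ := hherm.eigenvalues with hlam
    set V : Matrix (Fin n) (Fin n) ℂ := (hherm.eigenvectorUnitary : Matrix (Fin n) (Fin n) ℂ)
      with hV
    have hUV : star V * V = 1 := Matrix.mem_unitaryGroup_iff'.mp (hherm.eigenvectorUnitary).2
    have hVU : V * star V = 1 := Matrix.mem_unitaryGroup_iff.mp (hherm.eigenvectorUnitary).2
    have hH : H = V * diagonal (fun i => ((lam i : ℝ) : ℂ)) * star V := hherm.spectral_theorem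
    have hgibbs : ∀ t : ℝ, gibbs H t = V * diagonal (fun i => ((pf lam i t : ℝ) : ℂ)) * star V :=
      fun t => by rw [hH]; exact gibbs_eq V hn hUV hVU lam t
    -- trace formulas
    have htr1 : ∀ t : ℝ, ((H * gibbs H t).trace).re = ∑ i, lam i * pf lam i t := by
      intro t
      rw [hgibbs t, hH, conj_mul_conj V hUV, diagonal_mul_diagonal]
      have h : (fun i => ((lam i : ℝ) : ℂ) * ((pf lam i t : ℝ) : ℂ))
          = fun i => ((lam i * pf lam i t : ℝ) : ℂ) := funext fun i => by push_cast; ring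
      rw [h, trace_conj_diag V hUV, Complex.ofReal_re]
    have htr2 : ∀ t : ℝ, ((H * H * gibbs H t).trace).re = ∑ i, lam i ^ 2 * pf lam i t := by
      intro t
      rw [hgibbs t, hH, conj_mul_conj V hUV, conj_mul_conj V hUV, diagonal_mul_diagonal,
        diagonal_mul_diagonal]
      have h : (fun i => ((lam i : ℝ) : ℂ) * ((lam i : ℝ) : ℂ) * ((pf lam i t : ℝ) : ℂ))
          = fun i => ((lam i ^ 2 * pf lam i t : ℝ) : ℂ) := funext fun i => by push_cast; ring
      rw [h, trace_conj_diag V hUV, Complex.ofReal_re]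
    -- QFI computation
    have hD2 : ∀ i : Fin n, ∃ c, HasDerivAt (dpf lam i) c T :=
      fun i => exists_hasDerivAt_dpf hn i hT.ne'
    choose D2 hD2' using hD2
    have hFid : (fun ε => Fid (gibbs H T) (gibbs H (T + ε)))
        = fun ε => (∑ i, Real.sqrt (pf lam i T * pf lam i (T + ε))) ^ 2 := by
      funext ε
      rw [hgibbs T, hgibbs (T + ε),
        fid_conj V hUV (fun i => pf lam i T) (fun i => pf lam i (T + ε))
          (fun i => (pf_pos hn i T).le) (fun i => (pf_pos hn i (T + ε)).le)]
    have hQ : QFI (fun T' => gibbs H T') T = ∑ i, dpf lam i T ^ 2 / pf lam i T := by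
      rw [QFI, hFid, scalar_main hn hT D2 hD2']
      ring
    have hvar : ∑ i, dpf lam i T ^ 2 / pf lam i T
        = ((∑ i, lam i ^ 2 * pf lam i T) - (∑ i, lam i * pf lam i T) ^ 2) / T ^ 4 :=
      sum_alg hn hT.ne'
    constructor
    · rw [hQ, hvar, htr1, htr2]
    · rw [hQ, hvar]
      have hde : (fun T' => ((H * gibbs H T').trace).re)
          = fun T' => ∑ i, lam i * pf lam i T' := funext fun t => htr1 t
      have hdd : HasDerivAt (fun T' => ∑ i, lam i * pf lam i T')
          (∑ i, lam i * dpf lam i T) T :=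
        HasDerivAt.fun_sum fun i _ => (hasDerivAt_pf hn i hT.ne').const_mul (lam i)
      rw [hde, hdd.deriv, sum_alg2 hn hT.ne', div_div, ← pow_add]
end
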